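/- Suppose the graph is connected and L ⊆ X is nonempty. Then for any g : L → ℝ, the minimizer of the Dirichlet energy E(u) = (1/2) Σ_{x,y} w_{xy}(u(x)-u(y))², over u : X → ℝ subject to u = g on L, is unique. -/
import Mathlib


theorem dirichlet_minimizer_unique {X : Type*} [Fintype X] (w : X → X → ℝ)
    (hsym : ∀ x y, w x y = w y x) (hnn : ∀ x y, 0 ≤ w x y)
    (hconn : ∀ x y : X, Relation.ReflTransGen (fun a b => 0 < w a b) x y)
    (L : Set X) (hL : L.Nonempty) (g : X → ℝ)
    (u₁ u₂ : X → ℝ)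
    (hb₁ : ∀ x ∈ L, u₁ x = g x) (hb₂ : ∀ x ∈ L, u₂ x = g x)
    (hmin₁ : ∀ v : X → ℝ, (∀ x ∈ L, v x = g x) →
      (1/2) * ∑ x, ∑ y, w x y * (u₁ x - u₁ y)^2 ≤ (1/2) * ∑ x, ∑ y, w x y * (v x - v y)^2)
    (hmin₂ : ∀ v : X → ℝ, (∀ x ∈ L, v x = g x) →
      (1/2) * ∑ x, ∑ y, w x y * (u₂ x - u₂ y)^2 ≤ (1/2) * ∑ x, ∑ y, w x y * (v x - v y)^2) :
    u₁ = u₂ := by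
  set d : X → ℝ := fun x => u₁ x - u₂ x with hd
  set v : X → ℝ := fun x => (u₁ x + u₂ x) / 2 with hv
  have hvb : ∀ x ∈ L, v x = g x := by
    intro x hx
    simp only [hv, hb₁ x hx, hb₂ x hx]
    ring
  have h1 := hmin₁ v hvb
  have h2 := hmin₂ v hvb
  -- parallelogram identity termwise
  have hid : ∀ x y : X, w x y * (v x - v y)^2 =
      w x y * (u₁ x - u₁ y)^2 / 2 + w x y * (u₂ x - u₂ y)^2 / 2
        - w x y * (d x - d y)^2 / 4 := by
    intro x y
    simp only [hv, hd]
    ring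
  have hSv : ∑ x, ∑ y, w x y * (v x - v y)^2 =
      (∑ x, ∑ y, w x y * (u₁ x - u₁ y)^2) / 2
        + (∑ x, ∑ y, w x y * (u₂ x - u₂ y)^2) / 2
        - (∑ x, ∑ y, w x y * (d x - d y)^2) / 4 := by
    simp only [hid, Finset.sum_sub_distrib, Finset.sum_add_distrib, ← Finset.sum_div]
  have hEd : ∑ x, ∑ y, w x y * (d x - d y)^2 ≤ 0 := by
    rw [hSv] at h1 h2
    linarith
  have hEd0 : ∑ x, ∑ y, w x y * (d x - d y)^2 = 0 := by
    have : (0:ℝ) ≤ ∑ x, ∑ y, w x y * (d x - d y)^2 :=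
      Finset.sum_nonneg fun x _ => Finset.sum_nonneg fun y _ =>
        mul_nonneg (hnn x y) (sq_nonneg _)
    linarith
  have key : ∀ x y : X, w x y * (d x - d y)^2 = 0 := by
    intro x y
    have h := (Finset.sum_eq_zero_iff_of_nonneg (fun x _ =>
      Finset.sum_nonneg fun y _ => mul_nonneg (hnn x y) (sq_nonneg _))).mp hEd0
      x (Finset.mem_univ x)
    exact (Finset.sum_eq_zero_iff_of_nonneg (fun y _ =>
      mul_nonneg (hnn x y) (sq_nonneg _))).mp h y (Finset.mem_univ y)
  have hedge : ∀ x y : X, 0 < w x y → d x = d y := by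
    intro x y hw
    have := key x y
    rcases mul_eq_zero.mp this with h | h
    · exact absurd h (ne_of_gt hw)
    · have := pow_eq_zero_iff (n := 2) (by norm_num) |>.mp h
      linarith [sub_eq_zero.mp this]
  have hconst : ∀ x y : X, d x = d y := by
    intro x y
    induction hconn x y with
    | refl => rfl
    | tail _ hw ih => exact ih.trans (hedge _ _ hw)
  obtain ⟨x₀, hx₀⟩ := hL
  funext x
  have hdx : d x = 0 := by
    rw [hconst x x₀]
    simp [hd, hb₁ x₀ hx₀, hb₂ x₀ hx₀]
  have : u₁ x - u₂ x = 0 := hdx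
  linarith
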